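/- Let V be an n-dimensional vector space over a field R, n ≥ 2, and G ≤ PGL(V) isomorphic to S_m. Suppose 𝒳 is a G-orbit in P(V) with |𝒳| = m on which G acts faithfully, and no proper nonzero subspace of V is G-invariant. Then 𝒳 is an independent subset of size n, or an n-simplex, or char R = 3 and 𝒳 is a harmonic subset; moreover in the non-independent cases G equals the group G(𝒳) of extensions of permutations of 𝒳. -/

import Mathlib

/-- The projective space of `V`: the type of lines (1-dimensional subspaces). -/
abbrev ProjLine (K V : Type*) [DivisionRing K] [AddCommGroup V] [Module K V] : Type _ :=
  {P : Submodule K V // Module.finrank K P = 1}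

/-- A finite set of lines is *independent* if some choice of nonzero representative
vectors is linearly independent. -/
def IndepLines (K : Type*) {V : Type*} [DivisionRing K] [AddCommGroup V] [Module K V]
    (𝒳 : Set (Submodule K V)) : Prop :=
  ∃ x : 𝒳 → V, (∀ P : 𝒳, x P ∈ (P : Submodule K V) ∧ x P ≠ 0) ∧ LinearIndependent K x

/-- An `(m+1)`-element subset of `P(V)` is an *`m`-simplex* if it is not independent
but every `m`-element subset of it is independent. -/
def IsSimplex (K : Type*) {V : Type*} [DivisionRing K] [AddCommGroup V] [Module K V]
    (m : ℕ) (𝒳 : Set (Submodule K V)) : Prop :=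
  𝒳.Finite ∧ 𝒳.ncard = m + 1 ∧ (∀ P ∈ 𝒳, Module.finrank K P = 1) ∧
    ¬ IndepLines K 𝒳 ∧ ∀ 𝒴 ⊆ 𝒳, 𝒴.ncard = m → IndepLines K 𝒴

/-- A subset of `P(V)` is *harmonic* if it is `{⟨x⟩, ⟨y⟩, ⟨x+y⟩, ⟨x−y⟩}` for some
linearly independent `x, y`. -/
def Harmonic (K : Type*) {V : Type*} [DivisionRing K] [AddCommGroup V] [Module K V]
    (𝒳 : Set (Submodule K V)) : Prop :=
  ∃ x y : V, LinearIndependent K ![x, y] ∧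
    𝒳 = {Submodule.span K {x}, Submodule.span K {y},
      Submodule.span K {x + y}, Submodule.span K {x - y}}

/-- A permutation of the projective space lies in `PGL(V)` if it is induced by a
linear automorphism of `V`. -/
def IsProjectiveTransformation {K V : Type*} [DivisionRing K] [AddCommGroup V]
    [Module K V] (g : Equiv.Perm (ProjLine K V)) : Prop :=
  ∃ u : V ≃ₗ[K] V, ∀ P : ProjLine K V,
    ((g P : ProjLine K V) : Submodule K V) = Submodule.map (u : V →ₗ[K] V) (P : Submodule K V)

/-!
Choose a nonzero vector `v P` on each line `P ∈ 𝒳`. As `G ≅ S_m` acts faithfully on the `m`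
points of `𝒳`, it induces every permutation of them, so every permutation of the `v P` extends,
up to scalars, to a linear automorphism. Hence whether a subfamily is linearly independent depends
only on its size, and since the `v P` span `V` (irreducibility), any `n` of them are independent.

If `m ≥ n + 1`, any `n + 1` of the points form a frame, and a linear map fixing every line of a
frame is a scalar. So a projective transformation stabilizing `𝒳` is determined by the permutation
it induces, whence `G = G(𝒳)`; and a transposition fixing a frame would act trivially, whence
`m ≤ n + 2`. If `m = n + 2`, write the last two points as `∑ dᵢ bᵢ` and `∑ eᵢ bᵢ` in a basis
formed by the others: general position makes the ratios `eᵢ / dᵢ` pairwise distinct, whereas the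
transposition of the two points makes their squares equal, so `n = 2`. The four points are then
`x, y, x + y, x - y`, and the 3-cycle `x ↦ y ↦ x + y ↦ x` fixing `x - y` forces `3 = 0`.
-/

open Module Submodule

section LinearAlgebra

variable {K V ι : Type*} [Field K] [AddCommGroup V] [Module K V] {v : ι → V}

theorem LinearIndependent.of_mem_span_singleton {w : ι → V} (hw : LinearIndependent K w)
    (h : ∀ i, w i ∈ K ∙ v i) : LinearIndependent K v := by
  have hc : ∀ i, ∃ c : Kˣ, c • w i = v i := by
    intro i
    obtain ⟨c, hc⟩ := mem_span_singleton.1 (h i)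
    have hc0 : c ≠ 0 := by
      rintro rfl
      exact hw.ne_zero i (by rw [← hc, zero_smul])
    exact ⟨(Units.mk0 c hc0)⁻¹, by rw [← hc, Units.smul_def, smul_smul]; simp [hc0]⟩
  choose c hc using hc
  rw [show v = c • w from funext fun i => (hc i).symm]
  exact hw.units_smul c

theorem LinearIndepOn.span_image_eq_top [FiniteDimensional K V] {s : Finset ι}
    (h : LinearIndepOn K v s) (hs : s.card = finrank K V) : span K (v '' s) = ⊤ := by
  apply eq_top_of_finrank_eq
  rw [Set.image_eq_range, finrank_span_eq_card h]
  simpa using hs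

theorem LinearIndepOn.coeff_eq_of_sum_eq {s : Finset ι} (h : LinearIndepOn K v s)
    {f g : ι → K} (hfg : ∑ i ∈ s, f i • v i = ∑ i ∈ s, g i • v i) : ∀ i ∈ s, f i = g i := by
  intro i hi
  refine sub_eq_zero.1 (linearIndepOn_finset_iff.1 h (f - g) ?_ i hi)
  simp [sub_smul, Finset.sum_sub_distrib, hfg]

theorem map_sum_smul_of_eq_smul {s : Finset ι} {u : V →ₗ[K] V} {c : ι → K}
    (hc : ∀ i ∈ s, u (v i) = c i • v i) (f : ι → K) :
    u (∑ i ∈ s, f i • v i) = ∑ i ∈ s, (f i * c i) • v i := by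
  rw [map_sum]
  refine Finset.sum_congr rfl fun i hi => ?_
  rw [map_smul, hc i hi, smul_smul]

theorem LinearMap.map_mem_of_span_singleton_eq {u : V →ₗ[K] V} {w w' : V}
    {S : Submodule K V} (hw : K ∙ w = K ∙ w') (hu : u w ∈ S) : u w' ∈ S := by
  obtain ⟨c, rfl⟩ := mem_span_singleton.1 (hw ▸ mem_span_singleton_self w')
  rw [map_smul]
  exact S.smul_mem c hu

theorem Finset.exists_card_eq_le_card_compl [Fintype ι] [DecidableEq ι] {n k : ℕ}
    (h : n + k ≤ Fintype.card ι) : ∃ s : Finset ι, s.card = n ∧ k ≤ sᶜ.card := by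
  obtain ⟨s, -, hs⟩ := Finset.exists_subset_card_eq (s := (Finset.univ : Finset ι)) (n := n)
    (by rw [Finset.card_univ]; omega)
  exact ⟨s, hs, by rw [Finset.card_compl, hs]; omega⟩

theorem Finset.card_le_two_of_injOn_of_sq_eq {R : Type*} [CommRing R] [NoZeroDivisors R]
    {s : Finset ι} {r : ι → R} (hr : Set.InjOn r s)
    (hsq : ∀ i ∈ s, ∀ j ∈ s, r i ^ 2 = r j ^ 2) : s.card ≤ 2 := by
  by_contra! h
  obtain ⟨a, ha, b, hb, c, hc, hab, hac, hbc⟩ := Finset.two_lt_card.1 h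
  have hneg : ∀ j ∈ s, j ≠ a → r j = -r a := fun j hj hja =>
    (sq_eq_sq_iff_eq_or_eq_neg.1 (hsq j hj a ha)).resolve_left (hr.ne hj ha hja)
  exact hbc (hr hb hc ((hneg b hb hab.symm).trans (hneg c hc hac.symm).symm))

theorem LinearIndepOn.div_sq_eq_of_swap {s : Finset ι} (hli : LinearIndepOn K v s)
    {x y : V} {d e : ι → K} (hd : x = ∑ i ∈ s, d i • v i) (he : y = ∑ i ∈ s, e i • v i)
    (hd0 : ∀ i ∈ s, d i ≠ 0) {u : V →ₗ[K] V} (hu : ∀ i ∈ s, u (v i) ∈ K ∙ v i)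
    (hx : u x ∈ K ∙ y) (hy : u y ∈ K ∙ x) (hx0 : u x ≠ 0) :
    ∀ i ∈ s, ∀ j ∈ s, (e i / d i) ^ 2 = (e j / d j) ^ 2 := by
  choose! c hc using fun i hi => mem_span_singleton.1 (hu i hi)
  obtain ⟨α, hα⟩ := mem_span_singleton.1 hx
  obtain ⟨β, hβ⟩ := mem_span_singleton.1 hy
  have hα0 : α ≠ 0 := by
    rintro rfl
    exact hx0 (by rw [← hα, zero_smul])
  have hux := map_sum_smul_of_eq_smul (fun i hi => (hc i hi).symm) d
  have huy := map_sum_smul_of_eq_smul (fun i hi => (hc i hi).symm) e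
  rw [← hd, ← hα, he, Finset.smul_sum] at hux
  rw [← he, ← hβ, hd, Finset.smul_sum] at huy
  simp_rw [smul_smul] at hux huy
  have h1 := hli.coeff_eq_of_sum_eq hux.symm
  have h2 := hli.coeff_eq_of_sum_eq huy.symm
  have hratio : ∀ i ∈ s, (e i / d i) ^ 2 = β / α := by
    intro i hi
    have := hd0 i hi
    field_simp
    linear_combination (d i) * h2 i hi - (e i) * h1 i hi
  intro i hi j hj
  rw [hratio i hi, hratio j hj]

theorem three_eq_zero_of_harmonic_three_cycle {x y : V} (hxy : LinearIndependent K ![x, y])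
    {u : V →ₗ[K] V} (hx : u x ∈ K ∙ y) (hy : u y ∈ K ∙ (x + y)) (hxpy : u (x + y) ∈ K ∙ x)
    (hxmy : u (x - y) ∈ K ∙ (x - y)) (hy0 : u y ≠ 0) : (3 : K) = 0 := by
  obtain ⟨α, hα⟩ := mem_span_singleton.1 hx
  obtain ⟨β, hβ⟩ := mem_span_singleton.1 hy
  obtain ⟨γ, hγ⟩ := mem_span_singleton.1 hxpy
  obtain ⟨δ, hδ⟩ := mem_span_singleton.1 hxmy
  have hβ0 : β ≠ 0 := by
    rintro rfl
    exact hy0 (by rw [← hβ, zero_smul])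
  have h1 : (β - γ) • x + (α + β) • y = 0 := by
    rw [map_add, ← hα, ← hβ] at hγ
    rw [← sub_eq_zero.2 hγ.symm]
    module
  have h2 : (-β - δ) • x + (α - β + δ) • y = 0 := by
    rw [map_sub, ← hα, ← hβ] at hδ
    rw [← sub_eq_zero.2 hδ.symm]
    module
  obtain ⟨h1x, h1y⟩ := LinearIndependent.pair_iff.1 hxy _ _ h1
  obtain ⟨h2x, h2y⟩ := LinearIndependent.pair_iff.1 hxy _ _ h2
  have : 3 * β = 0 := by linear_combination h1y - h2y - h2x
  exact (mul_eq_zero.1 this).resolve_right hβ0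

end LinearAlgebra

section SymmetricFamilies

variable {K V ι : Type*} [Field K] [AddCommGroup V] [Module K V] {v : ι → V}

variable (K) in
def PermutationsExtend (v : ι → V) : Prop :=
  ∀ σ : Equiv.Perm ι, ∃ u : V ≃ₗ[K] V, ∀ i, u (v i) ∈ K ∙ v (σ i)

variable (K) in
def InGeneralPosition (v : ι → V) : Prop :=
  ∀ s : Finset ι, s.card ≤ finrank K V → LinearIndepOn K v s

theorem PermutationsExtend.linearIndepOn_image (h : PermutationsExtend K v) (σ : Equiv.Perm ι)
    {s : Set ι} (hs : LinearIndepOn K v s) : LinearIndepOn K v (σ '' s) := by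
  obtain ⟨u, hu⟩ := h σ
  exact LinearIndepOn.image_of_comp σ v <|
    LinearIndependent.of_mem_span_singleton (hs.map' u.toLinearMap u.ker) fun i => hu i

theorem PermutationsExtend.inGeneralPosition [Finite ι] [FiniteDimensional K V]
    (h : PermutationsExtend K v) (hspan : span K (Set.range v) = ⊤) : InGeneralPosition K v := by
  classical
  have := Fintype.ofFinite ι
  obtain ⟨b, -, -, hbspan, hb⟩ :=
    exists_linearIndepOn_extension (linearIndepOn_empty K v) (Set.subset_univ _)
  have hbcard : b.toFinset.card = finrank K V := by
    rw [Set.image_univ, ← span_le, hspan, top_le_iff] at hbspan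
    rw [← finrank_top K V, ← hbspan, Set.image_eq_range, finrank_span_eq_card hb,
      Set.toFinset_card]
  intro s hs
  -- `Perm ι` acts transitively on the subsets of size `#s`: move `s` inside the basis `b`
  obtain ⟨t, htb, htcard⟩ := Finset.exists_subset_card_eq (hs.trans hbcard.ge)
  obtain ⟨σ, hσ⟩ := (Set.powersetCard.isPretransitive (α := ι) (n := s.card)).exists_smul_eq
    ⟨t, Set.powersetCard.mem_iff.2 htcard⟩ ⟨s, Set.powersetCard.mem_iff.2 rfl⟩
  have hσs : ((σ '' t : Set ι)) = s := by
    have := congrArg (fun x : Set.powersetCard ι s.card => ((x : Finset ι) : Set ι)) hσ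
    rw [← this]
    ext
    simp only [Set.powersetCard.coe_smul, Finset.coe_smul_finset, Set.mem_smul_set,
      Equiv.Perm.smul_def, Set.mem_image, Finset.mem_coe]
  rw [← hσs]
  exact h.linearIndepOn_image σ (hb.mono (by simpa using htb))

theorem InGeneralPosition.ne_zero (hgen : InGeneralPosition K v) (hn : 1 ≤ finrank K V)
    (i : ι) : v i ≠ 0 :=
  (hgen {i} (by simpa using hn)).ne_zero (Finset.mem_singleton_self i)

theorem InGeneralPosition.notMem_span_singleton [DecidableEq ι] (hgen : InGeneralPosition K v)
    (hn : 2 ≤ finrank K V) {i j : ι} (hij : i ≠ j) : v i ∉ K ∙ v j := by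
  have hind := hgen {i, j} (by rw [Finset.card_pair hij]; exact hn)
  rw [Finset.coe_insert, Finset.coe_singleton, linearIndepOn_insert (by simpa using hij),
    Set.image_singleton] at hind
  exact hind.2

theorem InGeneralPosition.exists_sum_eq [FiniteDimensional K V] [DecidableEq ι]
    (hgen : InGeneralPosition K v) {s : Finset ι} (hs : s.card = finrank K V) {p : ι}
    (hp : p ∉ s) : ∃ d : ι → K, (∀ i ∈ s, d i ≠ 0) ∧ v p = ∑ i ∈ s, d i • v i := by
  have hvp : v p ∈ span K (v '' s) := by
    rw [(hgen s hs.le).span_image_eq_top hs]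
    exact mem_top
  obtain ⟨d, hd⟩ := (mem_span_image_finset_iff_exists_fun' K).1 hvp
  refine ⟨d, fun a ha hda => ?_, hd.symm⟩
  have hind := hgen (insert p (s.erase a)) (by
    rw [Finset.card_insert_of_notMem (fun h => hp (Finset.mem_of_mem_erase h)),
      Finset.card_erase_of_mem ha, hs]
    have := Finset.card_pos.2 ⟨a, ha⟩
    omega)
  rw [Finset.coe_insert, linearIndepOn_insert (fun h => hp (Finset.mem_of_mem_erase h))] at hind
  exact hind.2 ((mem_span_image_finset_iff_exists_fun' K).2
    ⟨d, by rw [Finset.sum_erase _ (by simp [hda]), hd]⟩)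

theorem InGeneralPosition.exists_eq_smul_id [FiniteDimensional K V] [DecidableEq ι]
    (hgen : InGeneralPosition K v) {s : Finset ι} (hs : s.card = finrank K V) {p : ι}
    (hp : p ∉ s) {u : V →ₗ[K] V} (hu : ∀ i ∈ insert p s, u (v i) ∈ K ∙ v i) :
    ∃ c : K, u = c • LinearMap.id := by
  obtain ⟨d, hd0, hd⟩ := hgen.exists_sum_eq hs hp
  choose! c hc using fun i hi => mem_span_singleton.1 (hu i hi)
  have hsum : ∑ i ∈ s, (d i * c i) • v i = ∑ i ∈ s, (c p * d i) • v i := by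
    rw [← map_sum_smul_of_eq_smul (fun i hi => (hc i (Finset.mem_insert_of_mem hi)).symm),
      ← hd, ← hc p (Finset.mem_insert_self _ _), hd, Finset.smul_sum]
    simp_rw [smul_smul]
  have hcoeff := (hgen s hs.le).coeff_eq_of_sum_eq hsum
  refine ⟨c p, LinearMap.ext_on ((hgen s hs.le).span_image_eq_top hs) ?_⟩
  rintro _ ⟨i, hi, rfl⟩
  have hci : c i = c p := mul_left_cancel₀ (hd0 i hi) ((hcoeff i hi).trans (mul_comm _ _))
  simp [← hc i (Finset.mem_insert_of_mem hi), hci]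

theorem InGeneralPosition.map_eq_map [Fintype ι] [DecidableEq ι] [FiniteDimensional K V]
    (hgen : InGeneralPosition K v) (hv : ∀ i, v i ≠ 0)
    (hcard : finrank K V + 1 ≤ Fintype.card ι) {u u' : V ≃ₗ[K] V}
    (h : ∀ i, u (v i) ∈ K ∙ u' (v i)) (P : Submodule K V) :
    P.map (u : V →ₗ[K] V) = P.map (u' : V →ₗ[K] V) := by
  obtain ⟨s, hs, hsc⟩ := Finset.exists_card_eq_le_card_compl hcard
  obtain ⟨p, hp⟩ := Finset.card_pos.1 hsc
  obtain ⟨c, hc⟩ := hgen.exists_eq_smul_id hs (Finset.mem_compl.1 hp)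
    (u := u'.symm.toLinearMap ∘ₗ u.toLinearMap) fun i _ => by
      obtain ⟨a, ha⟩ := mem_span_singleton.1 (h i)
      exact mem_span_singleton.2 ⟨a, by simp [← ha]⟩
  have hu : (u : V →ₗ[K] V) = c • (u' : V →ₗ[K] V) := by
    ext x
    simpa using congrArg u' (LinearMap.congr_fun hc x)
  have hc0 : c ≠ 0 := by
    rintro rfl
    exact hv p (u.injective (by simpa using LinearMap.congr_fun hu (v p)))
  rw [hu, Submodule.map_smul _ _ _ hc0]

theorem InGeneralPosition.injOn_div [DecidableEq ι]
    (hgen : InGeneralPosition K v) {s : Finset ι} (hs : s.card = finrank K V) {p q : ι}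
    (hp : p ∉ s) (hq : q ∉ s) (hpq : p ≠ q) {d e : ι → K}
    (hd : v p = ∑ i ∈ s, d i • v i) (he : v q = ∑ i ∈ s, e i • v i)
    (hd0 : ∀ i ∈ s, d i ≠ 0) : Set.InjOn (fun i => e i / d i) s := by
  intro a ha b hb hdiv
  by_contra! hab
  have hda := hd0 a ha
  have heq : d a * e b = d b * e a := by
    rw [div_eq_div_iff hda (hd0 b hb)] at hdiv
    linear_combination -hdiv
  set t := (s.erase a).erase b
  have hbt : b ∈ s.erase a := Finset.mem_erase.2 ⟨hab.symm, hb⟩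
  have hpt : p ∉ t := fun h => hp (Finset.mem_of_mem_erase (Finset.mem_of_mem_erase h))
  have hqt : q ∉ insert p t := by
    simp only [Finset.mem_insert, not_or]
    exact ⟨hpq.symm, fun h => hq (Finset.mem_of_mem_erase (Finset.mem_of_mem_erase h))⟩
  have hind := hgen (insert q (insert p t)) (by
    rw [Finset.card_insert_of_notMem hqt, Finset.card_insert_of_notMem hpt,
      Finset.card_erase_of_mem hbt, Finset.card_erase_of_mem ha, hs]
    have := Finset.one_lt_card.2 ⟨a, ha, b, hb, hab⟩
    omega)
  rw [Finset.coe_insert, linearIndepOn_insert (by exact_mod_cast hqt)] at hind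
  -- equal ratios kill both the `a`- and the `b`-coordinate of `d a • v q - e a • v p`
  have hw : d a • v q - e a • v p = ∑ i ∈ t, (d a * e i - e a * d i) • v i := by
    rw [Finset.sum_erase _ (by rw [heq, mul_comm (e a), sub_self, zero_smul]),
      Finset.sum_erase _ (by rw [mul_comm, sub_self, zero_smul]), he, hd,
      Finset.smul_sum, Finset.smul_sum, ← Finset.sum_sub_distrib]
    simp_rw [smul_smul, sub_smul]
  apply hind.2
  have hvq : v q = (d a)⁻¹ • ((d a • v q - e a • v p) + e a • v p) := by
    rw [sub_add_cancel, inv_smul_smul₀ hda]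
  rw [hvq, hw, Finset.coe_insert, Set.image_insert_eq]
  refine smul_mem _ _ (add_mem (span_mono (Set.subset_insert _ _) ?_)
    (smul_mem _ _ (subset_span (Set.mem_insert _ _))))
  exact sum_mem fun i hi => smul_mem _ _ (subset_span ⟨i, hi, rfl⟩)

theorem PermutationsExtend.div_sq_eq [DecidableEq ι] (h : PermutationsExtend K v)
    (hgen : InGeneralPosition K v) {s : Finset ι} (hs : s.card = finrank K V) {p q : ι}
    (hp : p ∉ s) (hq : q ∉ s) {d e : ι → K}
    (hd : v p = ∑ i ∈ s, d i • v i) (he : v q = ∑ i ∈ s, e i • v i)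
    (hd0 : ∀ i ∈ s, d i ≠ 0) : ∀ i ∈ s, ∀ j ∈ s, (e i / d i) ^ 2 = (e j / d j) ^ 2 := by
  intro i hi
  obtain ⟨u, hu⟩ := h (Equiv.swap p q)
  have hvp : v p ≠ 0 := hgen.ne_zero (hs ▸ Finset.card_pos.2 ⟨i, hi⟩) p
  refine (hgen s hs.le).div_sq_eq_of_swap hd he hd0 (u := u) (fun i hi => ?_) ?_ ?_ ?_ i hi
  · simpa [Equiv.swap_apply_of_ne_of_ne (ne_of_mem_of_not_mem hi hp)
      (ne_of_mem_of_not_mem hi hq)] using hu i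
  · simpa using hu p
  · simpa using hu q
  · exact u.map_ne_zero_iff.2 hvp

theorem PermutationsExtend.card_le_finrank_add_two [Fintype ι] [DecidableEq ι]
    [FiniteDimensional K V] (h : PermutationsExtend K v) (hgen : InGeneralPosition K v)
    (hn : 2 ≤ finrank K V) : Fintype.card ι ≤ finrank K V + 2 := by
  by_contra! hcard
  obtain ⟨s, hs, hsc⟩ := Finset.exists_card_eq_le_card_compl (k := 3) hcard
  obtain ⟨p, hp, q, hq, j, hj, hpq, hpj, hqj⟩ := Finset.two_lt_card.1 hsc
  rw [Finset.mem_compl] at hp hq hj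
  obtain ⟨u, hu⟩ := h (Equiv.swap q j)
  obtain ⟨c, hc⟩ := hgen.exists_eq_smul_id hs hp (u := u) fun i hi => by
    have hiq : i ≠ q := by rintro rfl; simp [hpq.symm, hq] at hi
    have hij : i ≠ j := by rintro rfl; simp [hpj.symm, hj] at hi
    simpa [Equiv.swap_apply_of_ne_of_ne hiq hij] using hu i
  have hvq := hu q
  rw [Equiv.swap_apply_left, ← LinearEquiv.coe_coe, hc] at hvq
  have hc0 : c ≠ 0 := by
    rintro rfl
    exact hgen.ne_zero (by omega) q (u.injective (by simp [← LinearEquiv.coe_coe, hc]))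
  exact hgen.notMem_span_singleton hn hqj ((smul_mem_iff _ hc0).1 (by simpa using hvq))

theorem PermutationsExtend.finrank_le_two [Fintype ι] [DecidableEq ι]
    [FiniteDimensional K V] (h : PermutationsExtend K v) (hgen : InGeneralPosition K v)
    (hcard : finrank K V + 2 ≤ Fintype.card ι) : finrank K V ≤ 2 := by
  obtain ⟨s, hs, hsc⟩ := Finset.exists_card_eq_le_card_compl hcard
  obtain ⟨p, hp, q, hq, hpq⟩ := Finset.one_lt_card.1 hsc
  rw [Finset.mem_compl] at hp hq
  obtain ⟨d, hd0, hd⟩ := hgen.exists_sum_eq hs hp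
  obtain ⟨e, -, he⟩ := hgen.exists_sum_eq hs hq
  rw [← hs]
  exact Finset.card_le_two_of_injOn_of_sq_eq (hgen.injOn_div hs hp hq hpq hd he hd0)
    (h.div_sq_eq hgen hs hp hq hd he hd0)

theorem PermutationsExtend.exists_harmonic_of_finrank_eq_two [DecidableEq ι]
    [FiniteDimensional K V] (h : PermutationsExtend K v) (hgen : InGeneralPosition K v)
    (hn : finrank K V = 2) {a b p q : ι} (hab : a ≠ b) (hpa : p ≠ a) (hpb : p ≠ b)
    (hqa : q ≠ a) (hqb : q ≠ b) (hpq : p ≠ q) :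
    ∃ x y : V, LinearIndependent K ![x, y] ∧ K ∙ v a = K ∙ x ∧ K ∙ v b = K ∙ y ∧
      K ∙ v p = K ∙ (x + y) ∧ K ∙ v q = K ∙ (x - y) := by
  have hs : ({a, b} : Finset ι).card = finrank K V := by rw [Finset.card_pair hab, hn]
  have hp : p ∉ ({a, b} : Finset ι) := by simp [hpa, hpb]
  have hq : q ∉ ({a, b} : Finset ι) := by simp [hqa, hqb]
  obtain ⟨d, hd0, hd⟩ := hgen.exists_sum_eq hs hp
  obtain ⟨e, he0, he⟩ := hgen.exists_sum_eq hs hq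
  have hmem : a ∈ ({a, b} : Finset ι) ∧ b ∈ ({a, b} : Finset ι) := by simp
  have hneg : e b / d b = -(e a / d a) :=
    (sq_eq_sq_iff_eq_or_eq_neg.1 (h.div_sq_eq hgen hs hp hq hd he hd0 b hmem.2 a hmem.1)
      ).resolve_left ((hgen.injOn_div hs hp hq hpq hd he hd0).ne hmem.2 hmem.1 hab.symm)
  have hda := hd0 a hmem.1
  have hdb := hd0 b hmem.2
  have hr : e a / d a ≠ 0 := div_ne_zero (he0 a hmem.1) hda
  refine ⟨d a • v a, d b • v b, ?_, (span_singleton_smul_eq hda.isUnit _).symm,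
    (span_singleton_smul_eq hdb.isUnit _).symm, by rw [hd, Finset.sum_pair hab], ?_⟩
  · rw [LinearIndependent.pair_smul_smul_iff hda.isUnit hdb.isUnit, LinearIndependent.pair_iff]
    exact (LinearIndepOn.pair_iff v hab).1 (by simpa using hgen _ hs.le)
  · have heb : e b = -(e a / d a) * d b := by rw [← hneg, div_mul_cancel₀ _ hdb]
    rw [← span_singleton_smul_eq hr.isUnit (d a • v a - d b • v b), he, Finset.sum_pair hab,
      heb, smul_sub, smul_smul, smul_smul, div_mul_cancel₀ _ hda, neg_mul, neg_smul,
      sub_eq_add_neg]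

theorem PermutationsExtend.harmonic_of_card_eq_four [Fintype ι] [DecidableEq ι]
    [FiniteDimensional K V] (h : PermutationsExtend K v) (hgen : InGeneralPosition K v)
    (hn : finrank K V = 2) (hcard : Fintype.card ι = 4) :
    (3 : K) = 0 ∧ ∃ x y : V, LinearIndependent K ![x, y] ∧
      Set.range (fun i => K ∙ v i) = {K ∙ x, K ∙ y, K ∙ (x + y), K ∙ (x - y)} := by
  obtain ⟨s, hs, hsc⟩ :=
    Finset.exists_card_eq_le_card_compl (ι := ι) (n := 2) (k := 2) (by omega)
  obtain ⟨a, b, hab, rfl⟩ := Finset.card_eq_two.1 hs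
  obtain ⟨p, hp, q, hq, hpq⟩ := Finset.one_lt_card.1 hsc
  simp only [Finset.mem_compl, Finset.mem_insert, Finset.mem_singleton, not_or] at hp hq
  have huniv : (Finset.univ : Finset ι) = {a, b, p, q} := by
    refine (Finset.eq_univ_of_card _ ?_).symm
    rw [Finset.card_insert_of_notMem (by simp [hab, Ne.symm hp.1, Ne.symm hq.1]),
      Finset.card_insert_of_notMem (by simp [Ne.symm hp.2, Ne.symm hq.2]),
      Finset.card_pair hpq, hcard]
  obtain ⟨x, y, hxy, ha, hb, hp', hq'⟩ :=
    h.exists_harmonic_of_finrank_eq_two hgen hn hab hp.1 hp.2 hq.1 hq.2 hpq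
  refine ⟨?_, x, y, hxy, ?_⟩
  · -- the 3-cycle `a ↦ b ↦ p ↦ a` fixing `q`
    obtain ⟨u, hu⟩ := h (Equiv.swap a p * Equiv.swap a b)
    have hua : u (v a) ∈ K ∙ y := by
      simpa [hb, Equiv.swap_apply_of_ne_of_ne (Ne.symm hab) (Ne.symm hp.2)] using hu a
    have hub : u (v b) ∈ K ∙ (x + y) := by simpa [hp'] using hu b
    have hup : u (v p) ∈ K ∙ x := by
      simpa [ha, Equiv.swap_apply_of_ne_of_ne hp.1 hp.2] using hu p
    have huq : u (v q) ∈ K ∙ (x - y) := by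
      simpa [hq', Equiv.swap_apply_of_ne_of_ne hq.1 hq.2,
        Equiv.swap_apply_of_ne_of_ne hq.1 hpq.symm] using hu q
    exact three_eq_zero_of_harmonic_three_cycle hxy (u := u)
      (LinearMap.map_mem_of_span_singleton_eq ha hua)
      (LinearMap.map_mem_of_span_singleton_eq hb hub)
      (LinearMap.map_mem_of_span_singleton_eq hp' hup)
      (LinearMap.map_mem_of_span_singleton_eq hq' huq)
      (u.map_ne_zero_iff.2 (by simpa using hxy.ne_zero 1))
  · ext L
    simp only [Set.mem_range, Set.mem_insert_iff, Set.mem_singleton_iff]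
    constructor
    · rintro ⟨i, rfl⟩
      have hi : i ∈ ({a, b, p, q} : Finset ι) := huniv ▸ Finset.mem_univ i
      simp only [Finset.mem_insert, Finset.mem_singleton] at hi
      rcases hi with rfl | rfl | rfl | rfl <;> simp [*]
    · rintro (rfl | rfl | rfl | rfl)
      exacts [⟨a, ha⟩, ⟨b, hb⟩, ⟨p, hp'⟩, ⟨q, hq'⟩]

theorem indepLines_image_iff (hinj : Function.Injective fun i => K ∙ v i) (s : Set ι) :
    IndepLines K ((fun i => K ∙ v i) '' s) ↔ LinearIndepOn K v s := by
  let e := Equiv.Set.image _ s hinj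
  constructor
  · rintro ⟨x, hx, hli⟩
    exact (hli.comp e e.injective).of_mem_span_singleton fun i => (hx (e i)).1
  · intro hli
    refine ⟨fun P => v (e.symm P), fun P => ⟨?_, hli.ne_zero (e.symm P).2⟩,
      hli.comp e.symm e.symm.injective⟩
    have hP := congrArg Subtype.val (e.apply_symm_apply P)
    simp only [e, Equiv.Set.image_apply] at hP
    rw [← hP]
    exact mem_span_singleton_self _

theorem InGeneralPosition.indepLines_of_card_le [Fintype ι] (hgen : InGeneralPosition K v)
    (hinj : Function.Injective fun i => K ∙ v i) (hcard : Fintype.card ι ≤ finrank K V) :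
    IndepLines K ((fun i => K ∙ v i) '' Set.univ) :=
  (indepLines_image_iff hinj _).2 (by simpa using hgen Finset.univ (by rwa [Finset.card_univ]))

theorem InGeneralPosition.isSimplex [Fintype ι] [FiniteDimensional K V]
    (hgen : InGeneralPosition K v) (hv : ∀ i, v i ≠ 0)
    (hinj : Function.Injective fun i => K ∙ v i) (hcard : Fintype.card ι = finrank K V + 1) :
    IsSimplex K (finrank K V) ((fun i => K ∙ v i) '' Set.univ) := by
  classical
  refine ⟨Set.toFinite _, ?_, ?_, ?_, ?_⟩
  · rw [Set.ncard_image_of_injective _ hinj, Set.ncard_univ, Nat.card_eq_fintype_card, hcard]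
  · rintro _ ⟨i, -, rfl⟩
    exact finrank_span_singleton (hv i)
  · rw [indepLines_image_iff hinj]
    intro hli
    have := (linearIndependent_equiv (Equiv.Set.univ ι)).1 hli |>.fintype_card_le_finrank
    omega
  · intro 𝒴 h𝒴 hcard𝒴
    rw [← Set.image_preimage_eq_of_subset (h𝒴.trans (Set.image_subset_range _ _)),
      indepLines_image_iff hinj, ← Set.coe_toFinset (_ ⁻¹' 𝒴)]
    refine hgen _ (le_of_eq ?_)
    rw [← hcard𝒴, ← Set.ncard_eq_toFinset_card',
      Set.ncard_preimage_of_injective_subset_range hinj (h𝒴.trans (Set.image_subset_range _ _))]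

theorem PermutationsExtend.indepLines_or_isSimplex_or_harmonic [Fintype ι] [DecidableEq ι]
    [FiniteDimensional K V] (h : PermutationsExtend K v) (hv : ∀ i, v i ≠ 0)
    (hspan : span K (Set.range v) = ⊤)
    (hinj : Function.Injective fun i => K ∙ v i) (hn : 2 ≤ finrank K V) :
    (IndepLines K ((fun i => K ∙ v i) '' Set.univ) ∧ Nat.card ι = finrank K V) ∨
      IsSimplex K (finrank K V) ((fun i => K ∙ v i) '' Set.univ) ∨
      (ringChar K = 3 ∧ Harmonic K ((fun i => K ∙ v i) '' Set.univ)) := by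
  have hgen := h.inGeneralPosition hspan
  have hle : finrank K V ≤ Fintype.card ι := by
    have := finrank_range_le_card (R := K) v
    rwa [Set.finrank, hspan, finrank_top] at this
  rcases (h.card_le_finrank_add_two hgen hn).lt_or_eq with hlt | heq
  · rcases (Nat.lt_succ_iff.1 hlt).lt_or_eq with hlt' | heq'
    · exact Or.inl ⟨hgen.indepLines_of_card_le hinj (by omega),
        by rw [Nat.card_eq_fintype_card]; omega⟩
    · exact Or.inr (Or.inl (hgen.isSimplex hv hinj heq'))
  · have hn2 : finrank K V = 2 := le_antisymm (h.finrank_le_two hgen heq.ge) hn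
    obtain ⟨h3, x, y, hxy, hrange⟩ := h.harmonic_of_card_eq_four hgen hn2 (by omega)
    refine Or.inr (Or.inr ⟨CharP.ringChar_of_prime_eq_zero Nat.prime_three (by simpa using h3),
      x, y, hxy, by rw [Set.image_univ, hrange]⟩)

end SymmetricFamilies

theorem Subgroup.apply_mem_of_eq_orbit {α : Type*} {G : Subgroup (Equiv.Perm α)} {x₀ : α}
    {X : Set α} (hX : X = {y | ∃ g ∈ G, g x₀ = y}) : ∀ g ∈ G, ∀ x ∈ X, g x ∈ X := by
  rw [hX]
  rintro g hg _ ⟨g', hg', rfl⟩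
  exact ⟨g * g', G.mul_mem hg hg', rfl⟩

theorem Subgroup.finite_of_eq_orbit {α : Type*} {G : Subgroup (Equiv.Perm α)} [Finite G]
    {x₀ : α} {X : Set α} (hX : X = {y | ∃ g ∈ G, g x₀ = y}) : X.Finite := by
  refine (Set.finite_range fun g : G => (g : Equiv.Perm α) x₀).subset ?_
  rw [hX]
  rintro _ ⟨g, hg, rfl⟩
  exact ⟨⟨g, hg⟩, rfl⟩

theorem Subgroup.exists_mem_apply_eq_of_faithful {α : Type*} {G : Subgroup (Equiv.Perm α)}
    {X : Set α} [Finite X] (hmem : ∀ g ∈ G, ∀ x ∈ X, g x ∈ X)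
    (hfaith : ∀ g ∈ G, (∀ x ∈ X, g x = x) → g = 1)
    (hcard : (Nat.card X).factorial ≤ Nat.card G) (σ : Equiv.Perm X) :
    ∃ g ∈ G, ∀ x : X, g x = σ x := by
  have hX : ∀ g : G, ∀ x, (g : Equiv.Perm α) x ∈ X ↔ x ∈ X := fun g x =>
    ⟨fun h => by simpa using hmem _ (G.inv_mem g.2) _ h, hmem g g.2 x⟩
  let ρ : G → Equiv.Perm X := fun g => (g : Equiv.Perm α).subtypePerm (hX g)
  have hρ : Function.Injective ρ := by
    intro g g' hgg'
    have h1 := hfaith _ (G.mul_mem (G.inv_mem g'.2) g.2) fun x hx => by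
      have := congrArg (fun τ : Equiv.Perm X => (τ ⟨x, hx⟩ : α)) hgg'
      simp only [ρ, Equiv.Perm.subtypePerm_apply] at this
      simp [Equiv.Perm.mul_apply, this]
    exact Subtype.ext (inv_mul_eq_one.1 h1).symm
  obtain ⟨g, hg⟩ := (hρ.bijective_of_nat_card_le (by rwa [Nat.card_perm])).2 σ
  exact ⟨g, g.2, fun x => congrArg Subtype.val (Equiv.ext_iff.1 hg x)⟩

section ProjectiveTransformations

variable {K V : Type*} [Field K] [AddCommGroup V] [Module K V]

theorem ProjLine.exists_eq_span_singleton (P : ProjLine K V) :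
    ∃ x : V, x ≠ 0 ∧ (P : Submodule K V) = K ∙ x := by
  have hP : (P : Submodule K V) ≠ ⊥ := by
    intro h
    have := P.2
    rw [h, finrank_bot] at this
    exact zero_ne_one this
  obtain ⟨x, hx, hx0⟩ := exists_mem_ne_zero_of_ne_bot hP
  exact ⟨x, hx0, eq_span_singleton_of_mem_of_finrank_eq_one P.2 hx hx0⟩

variable {G : Subgroup (Equiv.Perm (ProjLine K V))} {𝒳 : Set (ProjLine K V)} {v : 𝒳 → V}

theorem permutationsExtend_of_forall_exists_mem (hPGL : ∀ g ∈ G, IsProjectiveTransformation g)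
    (hind : ∀ σ : Equiv.Perm 𝒳, ∃ g ∈ G, ∀ P : 𝒳, g P = σ P)
    (hv : ∀ P : 𝒳, ((P : ProjLine K V) : Submodule K V) = K ∙ v P) : PermutationsExtend K v := by
  intro σ
  obtain ⟨g, hg, hgσ⟩ := hind σ
  obtain ⟨u, hu⟩ := hPGL g hg
  refine ⟨u, fun P => ?_⟩
  have := mem_map_of_mem (f := (u : V →ₗ[K] V)) (hv P ▸ mem_span_singleton_self (v P))
  rwa [← hu, hgσ, hv] at this

theorem span_range_eq_top_of_irreducible [Nonempty 𝒳]
    (hPGL : ∀ g ∈ G, IsProjectiveTransformation g) (hmem : ∀ g ∈ G, ∀ P ∈ 𝒳, g P ∈ 𝒳)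
    (hinv : ∀ W : Submodule K V,
      (∀ g ∈ G, ∀ P : ProjLine K V, (P : Submodule K V) ≤ W →
        ((g P : ProjLine K V) : Submodule K V) ≤ W) → W = ⊥ ∨ W = ⊤)
    (hv0 : ∀ P, v P ≠ 0) (hv : ∀ P : 𝒳, ((P : ProjLine K V) : Submodule K V) = K ∙ v P) :
    span K (Set.range v) = ⊤ := by
  refine (hinv _ fun g hg P hP => ?_).resolve_left fun h => ?_
  · obtain ⟨u, hu⟩ := hPGL g hg
    rw [hu]
    refine (map_mono hP).trans ?_
    rw [map_span, span_le]
    rintro _ ⟨_, ⟨Q, rfl⟩, rfl⟩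
    have := mem_map_of_mem (f := (u : V →ₗ[K] V)) (hv Q ▸ mem_span_singleton_self (v Q))
    rw [← hu, hv ⟨_, hmem g hg Q Q.2⟩] at this
    exact span_mono (Set.singleton_subset_iff.2 (Set.mem_range_self _)) this
  · obtain ⟨P⟩ := ‹Nonempty 𝒳›
    have : v P ∈ span K (Set.range v) := subset_span (Set.mem_range_self P)
    exact hv0 P (by simpa [h] using this)

theorem mem_of_isProjectiveTransformation [FiniteDimensional K V] [Fintype 𝒳]
    (hPGL : ∀ g ∈ G, IsProjectiveTransformation g)
    (hind : ∀ σ : Equiv.Perm 𝒳, ∃ g ∈ G, ∀ P : 𝒳, g P = σ P)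
    (hv0 : ∀ P, v P ≠ 0) (hv : ∀ P : 𝒳, ((P : ProjLine K V) : Submodule K V) = K ∙ v P)
    (hgen : InGeneralPosition K v) (hcard : finrank K V + 1 ≤ Fintype.card 𝒳)
    {g : Equiv.Perm (ProjLine K V)} (hg : IsProjectiveTransformation g)
    (hg𝒳 : ∀ P, P ∈ 𝒳 ↔ g P ∈ 𝒳) : g ∈ G := by
  classical
  obtain ⟨g', hg', hgg'⟩ := hind (g.subtypePerm fun P => (hg𝒳 P).symm)
  obtain ⟨u, hu⟩ := hg
  obtain ⟨u', hu'⟩ := hPGL g' hg'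
  have hmap := hgen.map_eq_map hv0 hcard (u := u) (u' := u') fun P => by
    have := mem_map_of_mem (f := (u : V →ₗ[K] V)) (hv P ▸ mem_span_singleton_self (v P))
    rwa [← hu, show g P = g' P from (hgg' P).symm, hu', hv, map_span, Set.image_singleton]
      at this
  have : g = g' := Equiv.ext fun P => Subtype.ext (by rw [hu, hu', hmap])
  exact this ▸ hg'

end ProjectiveTransformations

/-- Corollary 2: Let `G ≤ PGL(V)` (realized as a subgroup of the
permutations of `P(V)` consisting of projective transformations) be isomorphic to
`S m`, let `𝒳` be a `G`-orbit in `P(V)` of cardinality `m` on which `G` acts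
faithfully, and suppose no proper nonzero subspace of `V` is `G`-invariant.  Then
`𝒳` is a maximal independent subset (of size `n = dim V`), or an `n`-simplex, or
`char K = 3` and `𝒳` is harmonic; moreover if `𝒳` is not independent then
`G = G(𝒳)`, the set of projective transformations stabilizing `𝒳`. -/
theorem stmt19 {K V : Type*} [Field K] [AddCommGroup V] [Module K V]
    [FiniteDimensional K V] {n m : ℕ} (hn : Module.finrank K V = n) (h2 : 2 ≤ n)
    (G : Subgroup (Equiv.Perm (ProjLine K V)))
    (hPGL : ∀ g ∈ G, IsProjectiveTransformation g)
    (hG : Nonempty (G ≃* Equiv.Perm (Fin m)))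
    (P₀ : ProjLine K V) (𝒳 : Set (ProjLine K V))
    (h𝒳 : 𝒳 = {Q : ProjLine K V | ∃ g ∈ G, g P₀ = Q})
    (hcard : 𝒳.ncard = m)
    (hfaith : ∀ g ∈ G, (∀ P ∈ 𝒳, g P = P) → g = 1)
    (hinv : ∀ W : Submodule K V,
      (∀ g ∈ G, ∀ P : ProjLine K V, (P : Submodule K V) ≤ W →
        ((g P : ProjLine K V) : Submodule K V) ≤ W) → W = ⊥ ∨ W = ⊤) :
    ((IndepLines K (Subtype.val '' 𝒳) ∧ 𝒳.ncard = n) ∨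
      IsSimplex K n (Subtype.val '' 𝒳) ∨
      (ringChar K = 3 ∧ Harmonic K (Subtype.val '' 𝒳))) ∧
    (¬ IndepLines K (Subtype.val '' 𝒳) →
      ∀ g : Equiv.Perm (ProjLine K V),
        g ∈ G ↔ IsProjectiveTransformation g ∧ ∀ P : ProjLine K V, P ∈ 𝒳 ↔ g P ∈ 𝒳) := by
  classical
  obtain ⟨e⟩ := hG
  have : Finite G := Finite.of_equiv _ e.toEquiv.symm
  have hmem := Subgroup.apply_mem_of_eq_orbit h𝒳
  have : Fintype 𝒳 := (Subgroup.finite_of_eq_orbit h𝒳).fintype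
  have : Nonempty 𝒳 := ⟨⟨P₀, h𝒳 ▸ ⟨1, G.one_mem, rfl⟩⟩⟩
  have hind := Subgroup.exists_mem_apply_eq_of_faithful hmem hfaith (by
    rw [Nat.card_congr e.toEquiv, Nat.card_perm, Nat.card_fin, Nat.card_coe_set_eq, hcard])
  choose v hv0 hv using fun P : 𝒳 => ProjLine.exists_eq_span_singleton (P : ProjLine K V)
  have hsym := permutationsExtend_of_forall_exists_mem hPGL hind hv
  have hspan := span_range_eq_top_of_irreducible hPGL hmem hinv hv0 hv
  have hinj : Function.Injective fun P : 𝒳 => K ∙ v P := fun P Q hPQ =>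
    Subtype.ext (Subtype.ext (by rw [hv, hv]; exact hPQ))
  have himage : Subtype.val '' 𝒳 = (fun P : 𝒳 => K ∙ v P) '' Set.univ := by
    rw [Set.image_univ, show (fun P : 𝒳 => K ∙ v P) = Subtype.val ∘ Subtype.val from
      funext fun P => (hv P).symm, Set.range_comp, Subtype.range_coe]
  rw [himage, ← Nat.card_coe_set_eq, ← hn]
  have hgen := hsym.inGeneralPosition hspan
  refine ⟨hsym.indepLines_or_isSimplex_or_harmonic hv0 hspan hinj (hn ▸ h2), fun hni g => ?_⟩
  have hframe : finrank K V + 1 ≤ Fintype.card 𝒳 := by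
    by_contra! hle
    exact hni (hgen.indepLines_of_card_le hinj (by omega))
  refine ⟨fun hg => ⟨hPGL g hg, fun P => ⟨hmem g hg P, fun h => ?_⟩⟩, fun ⟨hg, hg𝒳⟩ =>
    mem_of_isProjectiveTransformation hPGL hind hv0 hv hgen hframe hg hg𝒳⟩
  simpa using hmem _ (G.inv_mem hg) _ h
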